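/- Let φ be a CNF formula with n variables and m clauses encoded as a data-graph G' (variable nodes with data value 'var', clause nodes with data value 'clause', nodes ⊤ and ⊥, '+' edges for positive literal occurrences and '−' edges for negative ones, and 'assigned' edges from every variable node to both ⊤ and ⊥). Let P be the uniform distribution (each with probability 2^{−n}) over the 2^n data-graphs H_f ⊆ G' obtained by, for each variable node, keeping exactly one of its two 'assigned' edges (encoding an assignment f), and let R(I)(G') = 1 for all I ⊆ G'. Let ν = [=var] ∨ [=⊤] ∨ [=⊥] ∨ ⟨(+)⁻ · assigned · [=⊤]⟩ ∨ ⟨(−)⁻ · assigned · [=⊥]⟩. Then the Global PQA value Σ_H A_{H,ν} · J(G')(H) equals (number of satisfying assignments of φ)/2^n; in particular it exceeds 1/2 if and only if strictly more than half of all assignments satisfy φ (MAJSAT). -/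
import Mathlib


/-- A data-graph: a set of nodes (natural numbers), a set of labeled directed edges,
and a data function assigning a data value to each node. -/
structure DataGraph (σe σn : Type) where
  V : Set ℕ
  E : Set (ℕ × σe × ℕ)
  D : ℕ → σn

/- Syntax of the positive fragment of regular XPath (GXPath-pos): path expressions and
node expressions, without path complement or node negation. -/
mutual
inductive PathExpr (σe σn : Type) where
  | eps : PathExpr σe σn
  | label : σe → PathExpr σe σn
  | inv : σe → PathExpr σe σn
  | test : NodeExpr σe σn → PathExpr σe σn
  | concat : PathExpr σe σn → PathExpr σe σn → PathExpr σe σn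
  | union : PathExpr σe σn → PathExpr σe σn → PathExpr σe σn
  | inter : PathExpr σe σn → PathExpr σe σn → PathExpr σe σn
  | star : PathExpr σe σn → PathExpr σe σn

inductive NodeExpr (σe σn : Type) where
  | eq : σn → NodeExpr σe σn
  | ne : σn → NodeExpr σe σn
  | and : NodeExpr σe σn → NodeExpr σe σn → NodeExpr σe σn
  | or : NodeExpr σe σn → NodeExpr σe σn → NodeExpr σe σn
  | ex : PathExpr σe σn → NodeExpr σe σn
  | exEq : PathExpr σe σn → PathExpr σe σn → NodeExpr σe σn
  | exNe : PathExpr σe σn → PathExpr σe σn → NodeExpr σe σn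
end

/- Semantics of GXPath-pos over a data-graph. -/
mutual
def pathSem {σe σn : Type} (G : DataGraph σe σn) : PathExpr σe σn → ℕ → ℕ → Prop
  | .eps, v, w => v = w ∧ v ∈ G.V
  | .label a, v, w => (v, a, w) ∈ G.E
  | .inv a, v, w => (w, a, v) ∈ G.E
  | .test ν, v, w => v = w ∧ nodeSem G ν v
  | .concat α β, v, w => ∃ u, pathSem G α v u ∧ pathSem G β u w
  | .union α β, v, w => pathSem G α v w ∨ pathSem G β v w
  | .inter α β, v, w => pathSem G α v w ∧ pathSem G β v w
  | .star α, v, w => v ∈ G.V ∧ w ∈ G.V ∧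
      Relation.ReflTransGen (fun x y => pathSem G α x y) v w

def nodeSem {σe σn : Type} (G : DataGraph σe σn) : NodeExpr σe σn → ℕ → Prop
  | .eq c, v => v ∈ G.V ∧ G.D v = c
  | .ne c, v => v ∈ G.V ∧ G.D v ≠ c
  | .and ν ν', v => nodeSem G ν v ∧ nodeSem G ν' v
  | .or ν ν', v => nodeSem G ν v ∨ nodeSem G ν' v
  | .ex α, v => ∃ w, pathSem G α v w
  | .exEq α β, v => ∃ w u, pathSem G α v w ∧ pathSem G β v u ∧ G.D w = G.D u
  | .exNe α β, v => ∃ w u, pathSem G α v w ∧ pathSem G β v u ∧ G.D w ≠ G.D u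
end

/-- Edge labels for the CNF encoding. -/
inductive EL where
  | plus | minus | assigned
deriving DecidableEq

/-- Data values for the CNF encoding. -/
inductive DV where
  | var | clause | bot | top
deriving DecidableEq

/-- The clean data-graph `H_f ⊆ G'` encoding a CNF formula `φ` together with an assignment
`f`: variable `i` is node `i`, clause `j` is node `n + j`, the `⊥`-node is `n + m` and the
`⊤`-node is `n + m + 1`; each variable node keeps exactly one of its two `assigned` edges
according to `f`. -/
def Hf (n m : ℕ) (φ : Fin m → Finset (Fin n × Bool)) (f : Fin n → Bool) :
    DataGraph EL DV where
  V := {k | k < n + m + 2}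
  E := {e | (∃ (i : Fin n) (j : Fin m), (i, true) ∈ φ j ∧ e = (i.val, EL.plus, n + j.val)) ∨
            (∃ (i : Fin n) (j : Fin m), (i, false) ∈ φ j ∧ e = (i.val, EL.minus, n + j.val)) ∨
            (∃ i : Fin n, f i = true ∧ e = (i.val, EL.assigned, n + m + 1)) ∨
            (∃ i : Fin n, f i = false ∧ e = (i.val, EL.assigned, n + m))}
  D := fun k => if k < n then DV.var else if k < n + m then DV.clause
    else if k = n + m then DV.bot else DV.top

/-- The node expression
`ν = [=var] ∨ [=⊤] ∨ [=⊥] ∨ ⟨(+)⁻·assigned·[=⊤]⟩ ∨ ⟨(−)⁻·assigned·[=⊥]⟩`. -/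
def nu16 : NodeExpr EL DV :=
  .or (.or (.or (.or (.eq DV.var) (.eq DV.top)) (.eq DV.bot))
    (.ex (.concat (.inv EL.plus) (.concat (.label EL.assigned) (.test (.eq DV.top))))))
    (.ex (.concat (.inv EL.minus) (.concat (.label EL.assigned) (.test (.eq DV.bot)))))

lemma key16 (n m : ℕ) (φ : Fin m → Finset (Fin n × Bool)) (f : Fin n → Bool) :
    (∀ v ∈ (Hf n m φ f).V, nodeSem (Hf n m φ f) nu16 v) ↔
      (∀ j : Fin m, ∃ l ∈ φ j, f l.1 = l.2) := by
  have hDtop : (Hf n m φ f).D (n + m + 1) = DV.top := by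
    simp only [Hf]
    rw [if_neg (by omega), if_neg (by omega), if_neg (by omega)]
  have hDbot : (Hf n m φ f).D (n + m) = DV.bot := by
    simp only [Hf]
    rw [if_neg (by omega), if_neg (by omega)]
    simp
  constructor
  · intro h j
    have hv : (n + j.val) ∈ (Hf n m φ f).V := by
      simp only [Hf, Set.mem_setOf_eq]; omega
    have := h (n + j.val) hv
    have hD : (Hf n m φ f).D (n + j.val) = DV.clause := by
      simp only [Hf]
      rw [if_neg (by omega), if_pos (by omega)]
    simp only [nu16, nodeSem, pathSem] at this
    rcases this with ((((⟨_, hc⟩ | ⟨_, hc⟩) | ⟨_, hc⟩) | ⟨w, u, ⟨hplus, hrest⟩⟩) |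
        ⟨w, u, ⟨hminus, hrest⟩⟩)
    · rw [hD] at hc; exact absurd hc (by simp)
    · rw [hD] at hc; exact absurd hc (by simp)
    · rw [hD] at hc; exact absurd hc (by simp)
    · -- plus edge (u, plus, n+j) with assigned edge u → top
      obtain ⟨w', hasg, rfl, _, htD⟩ := hrest
      -- hplus : (u, plus, n+j) ∈ E
      simp only [Hf, Set.mem_setOf_eq, Prod.mk.injEq] at hplus hasg
      rcases hplus with ⟨i, j', hmem, rfl, _, hj⟩ | ⟨i, j', _, _, h2, _⟩ |
          ⟨i, _, _, h2, _⟩ | ⟨i, _, _, h2, _⟩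
      · -- edge is (i, plus, n+j'), with n+j' = n+j
        have : j' = j := by omega
        subst this
        rcases hasg with ⟨i', j'', _, _, h2, _⟩ | ⟨i', j'', _, _, h2, _⟩ |
            ⟨i', hf, hi, _, hw⟩ | ⟨i', hf, hi, _, hw⟩
        · cases h2
        · cases h2
        · have : i = i' := Fin.val_injective hi
          exact ⟨(i, true), hmem, by rw [← this] at hf; exact hf⟩
        · -- assigned to bot, but D w' = top: contradiction
          rw [hw, hDbot] at htD; simp at htD
      all_goals cases h2
    · -- minus edge, symmetric
      obtain ⟨w', hasg, rfl, _, htD⟩ := hrest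
      simp only [Hf, Set.mem_setOf_eq, Prod.mk.injEq] at hminus hasg
      rcases hminus with ⟨i, j', _, _, h2, _⟩ | ⟨i, j', hmem, rfl, _, hj⟩ |
          ⟨i, _, _, h2, _⟩ | ⟨i, _, _, h2, _⟩
      · cases h2
      · have : j' = j := by omega
        subst this
        rcases hasg with ⟨i', j'', _, _, h2, _⟩ | ⟨i', j'', _, _, h2, _⟩ |
            ⟨i', hf, hi, _, hw⟩ | ⟨i', hf, hi, _, hw⟩
        · cases h2
        · cases h2
        · rw [hw, hDtop] at htD; simp at htD
        · have : i = i' := Fin.val_injective hi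
          exact ⟨(i, false), hmem, by rw [← this] at hf; exact hf⟩
      all_goals cases h2
  · intro h v hv
    simp only [Hf, Set.mem_setOf_eq] at hv
    simp only [nu16, nodeSem, pathSem]
    by_cases h1 : v < n
    · -- variable node
      apply Or.inl; apply Or.inl; apply Or.inl; apply Or.inl
      exact ⟨by simpa [Hf] using (by omega : v < n + m + 2), by simp [Hf, if_pos h1]⟩
    · by_cases h2 : v < n + m
      · -- clause node: v = n + j
        set j : Fin m := ⟨v - n, by omega⟩ with hj
        obtain ⟨⟨i, b⟩, hmem, hf⟩ := h j
        have hvj : v = n + j.val := by simp [hj]; omega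
        cases b
        · -- negative literal, f i = false: use minus branch
          apply Or.inr
          refine ⟨n + m, i.val, ?_, n + m, ?_, rfl, ?_, hDbot⟩
          · simp only [Hf, Set.mem_setOf_eq]
            exact Or.inr (Or.inl ⟨i, j, hmem, by rw [hvj]⟩)
          · simp only [Hf, Set.mem_setOf_eq]
            exact Or.inr (Or.inr (Or.inr ⟨i, hf, rfl⟩))
          · simp only [Hf, Set.mem_setOf_eq]; omega
        · -- positive literal, f i = true
          apply Or.inl; apply Or.inr
          refine ⟨n + m + 1, i.val, ?_, n + m + 1, ?_, rfl, ?_, hDtop⟩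
          · simp only [Hf, Set.mem_setOf_eq]
            exact Or.inl ⟨i, j, hmem, by rw [hvj]⟩
          · simp only [Hf, Set.mem_setOf_eq]
            exact Or.inr (Or.inr (Or.inl ⟨i, hf, rfl⟩))
          · simp only [Hf, Set.mem_setOf_eq]; omega
      · by_cases h3 : v = n + m
        · -- bot node
          apply Or.inl; apply Or.inl; apply Or.inr
          exact ⟨by simp only [Hf, Set.mem_setOf_eq]; omega, by rw [h3]; exact hDbot⟩
        · -- top node
          apply Or.inl; apply Or.inl; apply Or.inl; apply Or.inr
          have : v = n + m + 1 := by omega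
          exact ⟨by simp only [Hf, Set.mem_setOf_eq]; omega, by rw [this]; exact hDtop⟩

open Classical in
/-- with the uniform prior `2^{-n}` on the data-graphs `H_f` (one per
assignment `f`) and a trivial realization model, the posterior of each `H_f` is `2^{-n}` and
the Global PQA value of `ν16` equals `#{f : f ⊨ φ}/2^n`; in particular it exceeds `1/2` iff
strictly more than half of all assignments satisfy `φ` (MAJSAT). -/
theorem stmt_16 (n m : ℕ) (φ : Fin m → Finset (Fin n × Bool)) :
    (∑ f : Fin n → Bool,
        (if ∀ v ∈ (Hf n m φ f).V, nodeSem (Hf n m φ f) nu16 v then (1 : ℝ) else 0)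
          * ((1 : ℝ) / 2 ^ n))
      = ((Finset.univ.filter
            (fun f : Fin n → Bool => ∀ j : Fin m, ∃ l ∈ φ j, f l.1 = l.2)).card : ℝ)
          / 2 ^ n ∧
    ((∑ f : Fin n → Bool,
        (if ∀ v ∈ (Hf n m φ f).V, nodeSem (Hf n m φ f) nu16 v then (1 : ℝ) else 0)
          * ((1 : ℝ) / 2 ^ n)) > 1 / 2 ↔
      2 * (Finset.univ.filter
            (fun f : Fin n → Bool => ∀ j : Fin m, ∃ l ∈ φ j, f l.1 = l.2)).card > 2 ^ n) := by
  have hsum : (∑ f : Fin n → Bool,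
      (if ∀ v ∈ (Hf n m φ f).V, nodeSem (Hf n m φ f) nu16 v then (1 : ℝ) else 0)
        * ((1 : ℝ) / 2 ^ n))
      = ((Finset.univ.filter
          (fun f : Fin n → Bool => ∀ j : Fin m, ∃ l ∈ φ j, f l.1 = l.2)).card : ℝ) / 2 ^ n := by
    rw [← Finset.sum_mul]
    have : ∀ f : Fin n → Bool,
        (if ∀ v ∈ (Hf n m φ f).V, nodeSem (Hf n m φ f) nu16 v then (1 : ℝ) else 0)
        = (if ∀ j : Fin m, ∃ l ∈ φ j, f l.1 = l.2 then (1 : ℝ) else 0) := by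
      intro f; rw [if_congr (key16 n m φ f) rfl rfl]
    rw [Finset.sum_congr rfl fun f _ => this f, Finset.sum_boole]
    ring
  refine ⟨hsum, ?_⟩
  rw [hsum]
  rw [gt_iff_lt, div_lt_div_iff₀ (by norm_num) (by positivity)]
  constructor
  · intro h
    have : (2 ^ n : ℝ) < 2 * ((Finset.univ.filter
        (fun f : Fin n → Bool => ∀ j : Fin m, ∃ l ∈ φ j, f l.1 = l.2)).card : ℝ) := by
      linarith
    exact_mod_cast this
  · intro h
    have : (2 ^ n : ℝ) < 2 * ((Finset.univ.filter
        (fun f : Fin n → Bool => ∀ j : Fin m, ∃ l ∈ φ j, f l.1 = l.2)).card : ℝ) := by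
      exact_mod_cast h
    linarith
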